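/- Let p be a prime, k a field of characteristic p, n ≥ 1, and R := k[X_0, …, X_{n−1}]/(X_0^p, …, X_{n−1}^p) with x_i the image of X_i. For each 0 ≤ j < p^n with p-adic expansion j = Σ_ν j_ν p^ν set x^{[j]} := Π_ν x_ν^{j_ν}/j_ν!, and define the k-derivation δ := Σ_{i=0}^{n−1} x^{[p^i−1]} ∂/∂x_i of R, where x^{[p^i−1]} = Π_{ν=0}^{i−1} x_ν^{p−1}/(p−1)! and x^{[0]} := 1. Then δ is a simple derivation of R (the only ideals I of R with δ(I) ⊆ I are 0 and R), δ is nilpotent with δ^{p^n} = 0, and δ^{p^i}(x^{[p^i]}) = 1 for each 0 ≤ i ≤ n−1; in particular δ ∈ nsder(R). -/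

import Mathlib

/-- A derivation of a ring: an additive map satisfying the Leibniz rule. -/
def IsDerivation {R : Type*} [Ring R] (δ : R → R) : Prop :=
  (∀ a b : R, δ (a + b) = δ a + δ b) ∧ (∀ a b : R, δ (a * b) = δ a * b + a * δ b)

/-- `δ ∈ nsder(R)` (relative to the maximal ideal `m`): `δ` is a nilpotent simple
derivation such that whenever `δ^{p^i} ≠ 0` there is `y ∈ m` with `δ^{p^i}(y) = 1`. -/
def Nsder (p : ℕ) {R : Type*} [CommRing R] (m : Ideal R) (δ : R → R) : Prop :=
  IsDerivation δ ∧ (∃ N : ℕ, ∀ r : R, δ^[N] r = 0) ∧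
  (∀ I : Ideal R, (∀ a ∈ I, δ a ∈ I) → I = ⊥ ∨ I = ⊤) ∧
  ∀ i : ℕ, (∃ r : R, δ^[p ^ i] r ≠ 0) → ∃ y ∈ m, δ^[p ^ i] y = 1

/-- The truncated polynomial ring `k[X_0,…,X_{n−1}]/(X_0^p,…,X_{n−1}^p)`. -/
abbrev TruncPoly (p n : ℕ) (k : Type*) [CommRing k] :=
  MvPolynomial (Fin n) k ⧸
    Ideal.span (Set.range fun i : Fin n => (MvPolynomial.X i : MvPolynomial (Fin n) k) ^ p)

/-!
The divided-power monomials `x^{[j]}`, `j < p^n`, span `R`, and `δ` lowers them: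
`δ x^{[j]} = x^{[j-1]}` for `0 < j < p^n`. If `i` is the position of the lowest nonzero
`p`-adic digit of `j`, only the `i`-th Leibniz term survives, because for `i' > i` the factor
`x^{[p^{i'}-1]}` contains `x_i^{p-1}`, which kills the `x_i` of `x^{[j]}`; in the surviving term,
multiplying by `x^{[p^i-1]}` turns the digits below `i` into `p - 1`, exactly as subtracting `1`
from `j` does. Hence `δ^t x^{[j]} = x^{[j-t]}`, so `δ^{p^n} = 0`, and for `r = Σ c_j x^{[j]} ≠ 0`
with top index `J`, `δ^J r = c_J` is a unit lying in every `δ`-stable ideal containing `r`.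
-/

open MvPolynomial

namespace Nat

lemma sub_one_mod_of_dvd {p m : ℕ} (hm : m ≠ 0) (h : p ∣ m) : (m - 1) % p = p - 1 := by
  obtain ⟨t, rfl⟩ := h
  have ht : t ≠ 0 := by rintro rfl; simp at hm
  have hp : p ≠ 0 := by rintro rfl; simp at hm
  have : p * t - 1 = (p - 1) + p * (t - 1) := by
    rw [Nat.mul_sub, mul_one]
    have : p ≤ p * t := Nat.le_mul_of_pos_right p (Nat.pos_of_ne_zero ht)
    omega
  rw [this, Nat.add_mul_mod_self_left, Nat.mod_eq_of_lt (by omega)]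

lemma sub_one_mod_of_not_dvd {p m : ℕ} (h : ¬ p ∣ m) : (m - 1) % p = m % p - 1 := by
  rcases p.eq_zero_or_pos with rfl | hp
  · simp
  have h0 : m % p ≠ 0 := fun h' => h (Nat.dvd_of_mod_eq_zero h')
  have hlt : m % p < p := Nat.mod_lt _ hp
  have key : m - 1 = (m % p - 1) + p * (m / p) := by
    have := Nat.mod_add_div m p
    omega
  rw [key, Nat.add_mul_mod_self_left, Nat.mod_eq_of_lt (by omega)]

lemma sub_one_div_of_dvd {j q : ℕ} (hj : j ≠ 0) (h : q ∣ j) : (j - 1) / q = j / q - 1 := by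
  have := @Nat.succ_div (j - 1) q
  rw [Nat.sub_add_cancel (Nat.one_le_iff_ne_zero.2 hj), if_pos h] at this
  rw [this, Nat.add_sub_cancel]

lemma sub_one_div_of_not_dvd {j q : ℕ} (hj : j ≠ 0) (h : ¬ q ∣ j) : (j - 1) / q = j / q := by
  have := @Nat.succ_div (j - 1) q
  rw [Nat.sub_add_cancel (Nat.one_le_iff_ne_zero.2 hj), if_neg h, add_zero] at this
  exact this.symm

lemma div_pow_mod_ne_zero {p i j : ℕ} (hi : p ^ i ∣ j) (hi' : ¬ p ^ (i + 1) ∣ j) :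
    j / p ^ i % p ≠ 0 := fun h =>
  hi' (by rw [pow_succ]; exact Nat.mul_dvd_of_dvd_div hi (Nat.dvd_of_mod_eq_zero h))

-- `i` is the position of the lowest nonzero base-`p` digit of `j`.
lemma sub_one_div_pow_mod {p i j : ℕ} (hi : p ^ i ∣ j) (hi' : ¬ p ^ (i + 1) ∣ j) (ν : ℕ) :
    (j - 1) / p ^ ν % p =
      if ν < i then p - 1 else if ν = i then j / p ^ ν % p - 1 else j / p ^ ν % p := by
  have hj : j ≠ 0 := by rintro rfl; simp at hi'
  have hdiv_ne : ∀ ν ≤ i, j / p ^ ν ≠ 0 := fun ν hν => by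
    have hdvd := (pow_dvd_pow p hν).trans hi
    exact (Nat.div_pos (Nat.le_of_dvd (Nat.pos_of_ne_zero hj) hdvd)
      (Nat.pos_of_ne_zero fun h => hj (Nat.eq_zero_of_zero_dvd (h ▸ hdvd)))).ne'
  rcases lt_trichotomy ν i with hν | rfl | hν
  · rw [if_pos hν, sub_one_div_of_dvd hj ((pow_dvd_pow p hν.le).trans hi)]
    refine sub_one_mod_of_dvd (hdiv_ne ν hν.le) (Nat.dvd_div_of_mul_dvd ?_)
    rw [← pow_succ]
    exact (pow_dvd_pow p hν).trans hi
  · rw [if_neg (lt_irrefl ν), if_pos rfl, sub_one_div_of_dvd hj hi]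
    exact sub_one_mod_of_not_dvd fun h => div_pow_mod_ne_zero hi hi' (Nat.mod_eq_zero_of_dvd h)
  · rw [if_neg (by omega), if_neg hν.ne', sub_one_div_of_not_dvd hj]
    exact fun h => hi' ((pow_dvd_pow p hν).trans h)

lemma div_pow_mod_eq_zero_of_lt {p i j ν : ℕ} (hi : p ^ i ∣ j) (hν : ν < i) :
    j / p ^ ν % p = 0 := by
  rw [← Nat.mod_mul_right_div_self, ← pow_succ,
    Nat.mod_eq_zero_of_dvd ((pow_dvd_pow p hν).trans hi), Nat.zero_div]

lemma pow_div_pow_mod {p : ℕ} (hp : 1 < p) (i ν : ℕ) :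
    p ^ i / p ^ ν % p = if ν = i then 1 else 0 := by
  rcases lt_trichotomy ν i with hν | rfl | hν
  · rw [if_neg hν.ne, Nat.pow_div hν.le (by omega), Nat.pow_mod, Nat.mod_self,
      zero_pow (by omega), Nat.zero_mod]
  · rw [if_pos rfl, Nat.div_self (by positivity), Nat.mod_eq_of_lt hp]
  · rw [if_neg hν.ne', Nat.div_eq_of_lt (Nat.pow_lt_pow_right hp hν), Nat.zero_mod]

lemma pow_sub_one_div_pow_mod {p : ℕ} (hp : 1 < p) (i ν : ℕ) :
    (p ^ i - 1) / p ^ ν % p = if ν < i then p - 1 else 0 := by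
  rw [sub_one_div_pow_mod dvd_rfl
    (fun h => by simpa using Nat.pow_dvd_pow_iff_le_right hp |>.1 h), pow_div_pow_mod hp]
  split_ifs <;> rfl

end Nat

lemma Derivation.map_prod {R A M ι : Type*} [CommSemiring R] [CommSemiring A] [AddCommMonoid M]
    [Algebra R A] [Module A M] [Module R M] [DecidableEq ι] (D : Derivation R A M)
    (s : Finset ι) (f : ι → A) :
    D (∏ i ∈ s, f i) = ∑ i ∈ s, (∏ j ∈ s.erase i, f j) • D (f i) := by
  induction s using Finset.induction_on with
  | empty => simp
  | insert a s ha ih =>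
    rw [Finset.prod_insert ha, D.leibniz, ih, Finset.smul_sum, Finset.sum_insert ha,
      Finset.erase_insert ha, add_comm]
    congr 1
    refine Finset.sum_congr rfl fun i hi => ?_
    rw [Finset.erase_insert_of_ne (by rintro rfl; exact ha hi),
      Finset.prod_insert (fun h => ha (Finset.mem_of_mem_erase h)), smul_smul]

lemma CharP.natCast_ne_zero_of_lt (R : Type*) [AddMonoidWithOne R] {p : ℕ} [CharP R p] {e : ℕ}
    (h0 : e ≠ 0) (h : e < p) : (e : R) ≠ 0 :=
  fun he => h0 (Nat.eq_zero_of_dvd_of_lt ((CharP.cast_eq_zero_iff R p e).1 he) h)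

lemma CharP.factorial_ne_zero (R : Type*) [AddMonoidWithOne R] {p : ℕ} [CharP R p]
    (hp : p.Prime) {e : ℕ} (he : e < p) : (e.factorial : R) ≠ 0 := by
  rw [Ne, CharP.cast_eq_zero_iff R p, hp.dvd_factorial]
  omega

section DividedPowers

variable (k : Type*) {A : Type*} [Field k] [CommRing A] [Algebra k A]

def divPow (a : A) (e : ℕ) : A := algebraMap k A (e.factorial : k)⁻¹ * a ^ e

/-- The paper's `x^{[j]}`. -/
def divPowMonomial (p : ℕ) {n : ℕ} (x : Fin n → A) (j : ℕ) : A :=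
  ∏ ν : Fin n, divPow k (x ν) (j / p ^ (ν : ℕ) % p)

variable {k}

@[simp]
lemma divPow_zero (a : A) : divPow k a 0 = 1 := by
  simp [divPow]

@[simp]
lemma divPow_one (a : A) : divPow k a 1 = a := by
  simp [divPow]

lemma AlgHom.map_divPow {B : Type*} [CommRing B] [Algebra k B] (f : A →ₐ[k] B) (a : A) (e : ℕ) :
    f (divPow k a e) = divPow k (f a) e := by
  simp [divPow]

lemma divPow_mul_divPow_eq_zero {p : ℕ} {a : A} (ha : a ^ p = 0) {b c : ℕ} (h : p ≤ b + c) :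
    divPow k a b * divPow k a c = 0 := by
  rw [divPow, divPow, mul_mul_mul_comm, ← pow_add, ← Nat.sub_add_cancel h, pow_add, ha,
    mul_zero, mul_zero]

lemma pow_eq_smul_divPow {a : A} {e : ℕ} (he : (e.factorial : k) ≠ 0) :
    a ^ e = (e.factorial : k) • divPow k a e := by
  rw [divPow, Algebra.smul_def, ← mul_assoc, ← map_mul, mul_inv_cancel₀ he, map_one, one_mul]

lemma Derivation.map_divPow (D : Derivation k A A) (a : A) {e : ℕ} (he : (e : k) ≠ 0) :
    D (divPow k a e) = divPow k a (e - 1) * D a := by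
  have he0 : e ≠ 0 := by rintro rfl; simp at he
  have hfac : ((e.factorial : k))⁻¹ * e = ((e - 1).factorial : k)⁻¹ := by
    rw [← Nat.mul_factorial_pred he0, Nat.cast_mul, mul_inv, mul_comm, ← mul_assoc,
      mul_inv_cancel₀ he, one_mul]
  rw [divPow, divPow, D.leibniz, D.map_algebraMap, smul_zero, add_zero, D.leibniz_pow,
    ← hfac, map_mul, _root_.map_natCast, smul_eq_mul, smul_eq_mul, nsmul_eq_mul]
  ring

variable (p : ℕ) {n : ℕ} (x : Fin n → A)

@[simp]
lemma divPowMonomial_zero : divPowMonomial k p x 0 = 1 := by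
  simp [divPowMonomial]

lemma divPowMonomial_pow (hp : 1 < p) (i : Fin n) : divPowMonomial k p x (p ^ (i : ℕ)) = x i := by
  simp only [divPowMonomial, Nat.pow_div_pow_mod hp, Fin.val_inj]
  simp [apply_ite]

lemma AlgHom.map_divPowMonomial {B : Type*} [CommRing B] [Algebra k B] (f : A →ₐ[k] B) (j : ℕ) :
    f (divPowMonomial k p x j) = divPowMonomial k p (fun ν => f (x ν)) j := by
  simp [divPowMonomial, AlgHom.map_divPow]

end DividedPowers

section DerivationOfDivPowMonomial

variable {k A : Type*} [Field k] [CommRing A] [Algebra k A] {p : ℕ} [Fact p.Prime] [CharP k p]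
  {n : ℕ} {x : Fin n → A} (D : Derivation k A A)
  (hD : ∀ i : Fin n, D (x i) = divPowMonomial k p x (p ^ (i : ℕ) - 1))
  {i : Fin n} {j : ℕ} (hi : p ^ (i : ℕ) ∣ j) (hi' : ¬ p ^ ((i : ℕ) + 1) ∣ j)
include hD hi hi'

lemma Derivation.prod_erase_smul_map_divPow_of_ne (hx : ∀ ν, x ν ^ p = 0) {ν : Fin n}
    (hνi : ν ≠ i) :
    (∏ μ ∈ Finset.univ.erase ν, divPow k (x μ) (j / p ^ (μ : ℕ) % p)) •
      D (divPow k (x ν) (j / p ^ (ν : ℕ) % p)) = 0 := by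
  have hp := (Fact.out : p.Prime)
  by_cases hν : j / p ^ (ν : ℕ) % p = 0
  · simp [hν]
  have hiν : (i : ℕ) < ν := lt_of_le_of_ne
    (not_lt.1 fun h => hν (Nat.div_pow_mod_eq_zero_of_lt hi h)) (Fin.val_ne_of_ne hνi.symm)
  -- the digit of `j` at `i` is nonzero, while that of `p ^ ν - 1` is `p - 1`
  have hvanish := divPow_mul_divPow_eq_zero (k := k) (hx i) (b := j / p ^ (i : ℕ) % p)
    (c := p - 1) (by have := Nat.div_pow_mod_ne_zero hi hi'; omega)
  rw [D.map_divPow _ (CharP.natCast_ne_zero_of_lt k hν (Nat.mod_lt _ hp.pos)), hD, divPowMonomial,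
    ← Finset.mul_prod_erase _ _ (Finset.mem_univ i),
    ← Finset.mul_prod_erase _ _ (Finset.mem_erase.2 ⟨Ne.symm hνi, Finset.mem_univ i⟩),
    Nat.pow_sub_one_div_pow_mod hp.one_lt, if_pos hiν, smul_eq_mul]
  generalize divPow k (x i) (j / p ^ (i : ℕ) % p) = a, divPow k (x i) (p - 1) = b at hvanish ⊢
  rw [show ∀ P B Q : A, a * P * (B * (b * Q)) = a * b * (P * B * Q) from fun _ _ _ => by ring,
    hvanish, zero_mul]

lemma Derivation.prod_erase_smul_map_divPow_self :
    (∏ μ ∈ Finset.univ.erase i, divPow k (x μ) (j / p ^ (μ : ℕ) % p)) •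
      D (divPow k (x i) (j / p ^ (i : ℕ) % p)) = divPowMonomial k p x (j - 1) := by
  have hp := (Fact.out : p.Prime)
  set g : Fin n → A := fun μ =>
    divPow k (x μ) (if μ = i then j / p ^ (μ : ℕ) % p - 1 else j / p ^ (μ : ℕ) % p)
  have hdigit : ∀ μ : Fin n, g μ * divPow k (x μ) ((p ^ (i : ℕ) - 1) / p ^ (μ : ℕ) % p) =
      divPow k (x μ) ((j - 1) / p ^ (μ : ℕ) % p) := fun μ => by
    rw [Nat.pow_sub_one_div_pow_mod hp.one_lt, Nat.sub_one_div_pow_mod hi hi']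
    rcases lt_trichotomy (μ : ℕ) i with hμ | hμ | hμ
    · simp [g, hμ, hμ.ne, Fin.ext_iff, Nat.div_pow_mod_eq_zero_of_lt hi hμ]
    · simp [g, hμ, Fin.ext_iff]
    · have : ¬ μ < i := not_lt.2 (Fin.le_iff_val_le_val.2 hμ.le)
      simp [g, hμ.ne', this, Fin.ext_iff]
  rw [D.map_divPow _ (CharP.natCast_ne_zero_of_lt k (Nat.div_pow_mod_ne_zero hi hi')
      (Nat.mod_lt _ hp.pos)), hD, divPowMonomial, divPowMonomial, smul_eq_mul, ← mul_assoc,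
    ← Finset.prod_congr rfl fun μ _ => hdigit μ, Finset.prod_mul_distrib,
    ← Finset.prod_erase_mul _ g (Finset.mem_univ i)]
  congr 2
  · exact Finset.prod_congr rfl fun μ hμ => by simp [g, Finset.ne_of_mem_erase hμ]
  · simp [g]

omit hi hi' in
lemma Derivation.map_divPowMonomial (hx : ∀ ν, x ν ^ p = 0) (hj0 : j ≠ 0) (hj : j < p ^ n) :
    D (divPowMonomial k p x j) = divPowMonomial k p x (j - 1) := by
  have hp := (Fact.out : p.Prime)
  have hin : padicValNat p j < n := (Nat.pow_lt_pow_iff_right hp.one_lt).1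
    ((Nat.le_of_dvd (Nat.pos_of_ne_zero hj0) pow_padicValNat_dvd).trans_lt hj)
  have hi : p ^ padicValNat p j ∣ j := pow_padicValNat_dvd
  have hi' : ¬ p ^ (padicValNat p j + 1) ∣ j := pow_succ_padicValNat_not_dvd hj0
  rw [divPowMonomial, D.map_prod, Finset.sum_eq_single ⟨padicValNat p j, hin⟩
    (fun ν _ hν => D.prod_erase_smul_map_divPow_of_ne hD (i := ⟨_, hin⟩) hi hi' hx hν)
    (by simp)]
  exact D.prod_erase_smul_map_divPow_self hD (i := ⟨_, hin⟩) hi hi'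

end DerivationOfDivPowMonomial

section Ladder

variable {k A : Type*} [Field k] [CommRing A] [Algebra k A] (D : Derivation k A A)

lemma Derivation.iterate_sum_smul {ι : Type*} (s : Finset ι) (c : ι → k) (v : ι → A) (t : ℕ) :
    D^[t] (∑ i ∈ s, c i • v i) = ∑ i ∈ s, c i • D^[t] (v i) := by
  simp only [← Derivation.coeFn_coe, ← Module.End.coe_pow, map_sum, _root_.map_smul]

variable {e : ℕ → A} {N : ℕ} (he : ∀ j, j ≠ 0 → j < N → D (e j) = e (j - 1))
include he

lemma Derivation.iterate_apply_of_le {t j : ℕ} (htj : t ≤ j) (hj : j < N) :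
    D^[t] (e j) = e (j - t) := by
  induction t generalizing j with
  | zero => rfl
  | succ t ih =>
    rw [Function.iterate_succ_apply, he j (by omega) hj, ih (by omega) (by omega)]
    congr 1
    omega

lemma Derivation.iterate_apply_of_lt (he0 : e 0 = 1) {t j : ℕ} (hjt : j < t) (hj : j < N) :
    D^[t] (e j) = 0 := by
  obtain ⟨s, rfl⟩ := Nat.exists_eq_add_of_lt hjt
  rw [show j + s + 1 = s + (j + 1) by ring, Function.iterate_add_apply,
    Function.iterate_succ_apply',
    D.iterate_apply_of_le he le_rfl hj, Nat.sub_self, he0, D.map_one_eq_zero,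
    Function.iterate_fixed D.map_zero]

variable (hspan : Submodule.span k (Set.range fun j : Fin N => e j) = ⊤)
include hspan

lemma Derivation.iterate_eq_zero (he0 : e 0 = 1) {m : ℕ} (hm : N ≤ m) (r : A) :
    D^[m] r = 0 := by
  obtain ⟨c, rfl⟩ :=
    (Submodule.mem_span_range_iff_exists_fun k).1 (hspan ▸ Submodule.mem_top (x := r))
  rw [D.iterate_sum_smul]
  refine Finset.sum_eq_zero fun j _ => ?_
  rw [D.iterate_apply_of_lt he he0 (by omega) j.isLt, smul_zero]

/-- Applying `D` to a nonzero element as many times as its top coefficient index leaves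
a nonzero scalar. -/
lemma Derivation.ideal_eq_bot_or_top (he0 : e 0 = 1) (I : Ideal A) (hI : ∀ a ∈ I, D a ∈ I) :
    I = ⊥ ∨ I = ⊤ := by
  classical
  refine or_iff_not_imp_left.2 fun hbot => ?_
  obtain ⟨r, hrI, hr0⟩ := Submodule.exists_mem_ne_zero_of_ne_bot hbot
  obtain ⟨c, rfl⟩ :=
    (Submodule.mem_span_range_iff_exists_fun k).1 (hspan ▸ Submodule.mem_top (x := r))
  have hne : (Finset.univ.filter fun j => c j ≠ 0).Nonempty := by
    refine Finset.filter_nonempty_iff.2 ?_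
    by_contra! h
    exact hr0 (by simp [h])
  obtain ⟨J, hJ, hJmax⟩ := Finset.exists_max_image _ id hne
  have htop : D^[J] (∑ j, c j • e j) = algebraMap k A (c J) := by
    rw [D.iterate_sum_smul, Finset.sum_eq_single J]
    · rw [D.iterate_apply_of_le he le_rfl J.isLt, Nat.sub_self, he0,
        Algebra.algebraMap_eq_smul_one]
    · intro j _ hjJ
      rcases lt_or_gt_of_ne hjJ with hlt | hgt
      · rw [D.iterate_apply_of_lt he he0 hlt j.isLt, smul_zero]
      · have : c j = 0 := by
          by_contra hj
          exact (hJmax j (by simpa using hj)).not_gt hgt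
        rw [this, zero_smul]
    · simp
  have hmem : algebraMap k A (c J) ∈ I := htop ▸ Set.MapsTo.iterate hI J hrI
  exact Ideal.eq_top_of_isUnit_mem I hmem ((isUnit_iff_ne_zero.2 (by simpa using hJ)).map _)

end Ladder

section Span

variable {k A : Type*} [Field k] [CommRing A] [Algebra k A] {p : ℕ} [Fact p.Prime] [CharP k p]
  {n : ℕ} {x : Fin n → A}

lemma prod_pow_mem_span_divPowMonomial (hx : ∀ ν, x ν ^ p = 0) (u : Fin n → ℕ) :
    ∏ ν, x ν ^ u ν ∈
      Submodule.span k (Set.range fun j : Fin (p ^ n) => divPowMonomial k p x j) := by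
  by_cases hu : ∃ ν, p ≤ u ν
  · obtain ⟨ν, hν⟩ := hu
    rw [Finset.prod_eq_zero (Finset.mem_univ ν)
      (by rw [← Nat.sub_add_cancel hν, pow_add, hx, mul_zero])]
    exact zero_mem _
  push Not at hu
  set j := finFunctionFinEquiv fun ν => (⟨u ν, hu ν⟩ : Fin p)
  have hdigit : ∀ ν : Fin n, (j : ℕ) / p ^ (ν : ℕ) % p = u ν := fun ν => by
    rw [← finFunctionFinEquiv_symm_apply_val, Equiv.symm_apply_apply]
  have hj : ∏ ν, x ν ^ u ν = (∏ ν, ((u ν).factorial : k)) • divPowMonomial k p x j := by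
    rw [divPowMonomial, Algebra.smul_def, map_prod, ← Finset.prod_mul_distrib]
    refine Finset.prod_congr rfl fun ν _ => ?_
    rw [hdigit, ← Algebra.smul_def,
      ← pow_eq_smul_divPow (CharP.factorial_ne_zero k Fact.out (hu ν))]
  exact hj ▸ Submodule.smul_mem _ _ (Submodule.subset_span ⟨j, rfl⟩)

lemma aeval_mem_span_divPowMonomial (hx : ∀ ν, x ν ^ p = 0) (f : MvPolynomial (Fin n) k) :
    aeval x f ∈ Submodule.span k (Set.range fun j : Fin (p ^ n) => divPowMonomial k p x j) := by
  induction f using MvPolynomial.induction_on' with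
  | monomial u a =>
    rw [aeval_monomial, Finsupp.prod_pow, ← Algebra.smul_def]
    exact Submodule.smul_mem _ _ (prod_pow_mem_span_divPowMonomial hx u)
  | add f g hf hg =>
    rw [map_add]
    exact add_mem hf hg

end Span

lemma Derivation.map_mem_span_of_map_mem {R A : Type*} [CommRing R] [CommRing A] [Algebra R A]
    (D : Derivation R A A) {s : Set A} (hs : ∀ a ∈ s, D a ∈ Ideal.span s) {a : A}
    (ha : a ∈ Ideal.span s) : D a ∈ Ideal.span s := by
  induction ha using Submodule.span_induction with
  | mem a ha => exact hs a ha
  | zero => simp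
  | add a b _ _ ha hb => rw [D.map_add]; exact add_mem ha hb
  | smul a b hb ihb =>
    rw [smul_eq_mul, D.leibniz]
    exact add_mem (Ideal.mul_mem_left _ _ ihb) (Ideal.mul_mem_right _ _ hb)

namespace TruncPoly

variable (p n : ℕ) (k : Type*) [Field k] {x : Fin n → TruncPoly p n k}

lemma pow_eq_zero_of_eq_mk_X (hx : ∀ i, x i = Ideal.Quotient.mk _ (X i)) (i : Fin n) :
    x i ^ p = 0 := by
  rw [hx, ← map_pow, Ideal.Quotient.eq_zero_iff_mem]
  exact Ideal.subset_span ⟨i, rfl⟩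

lemma span_divPowMonomial_eq_top [Fact p.Prime] [CharP k p]
    (hx : ∀ i, x i = Ideal.Quotient.mk _ (X i)) :
    Submodule.span k (Set.range fun j : Fin (p ^ n) => divPowMonomial k p x j) = ⊤ := by
  refine eq_top_iff.2 fun r _ => ?_
  obtain ⟨f, rfl⟩ := Ideal.Quotient.mkₐ_surjective k _ r
  have hf : aeval x f = Ideal.Quotient.mkₐ k _ f := by
    rw [show x = Ideal.Quotient.mkₐ k _ ∘ X from funext hx, ← aeval_unique]
  exact hf ▸ aeval_mem_span_divPowMonomial (pow_eq_zero_of_eq_mk_X p n k hx) f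

/-- The `k`-derivation `Σ_i x^{[p^i-1]} ∂/∂x_i`, descended from the polynomial ring, where it
kills every `X_i ^ p` since `p = 0` in `k`. -/
noncomputable def derivation [CharP k p] : Derivation k (TruncPoly p n k) (TruncPoly p n k) :=
  Derivation.liftOfSurjective (Ideal.Quotient.mkₐ_surjective k _)
    (d := mkDerivation k fun i => divPowMonomial k p X (p ^ (i : ℕ) - 1)) fun f hf => by
      rw [Ideal.Quotient.mkₐ_eq_mk, Ideal.Quotient.eq_zero_iff_mem] at hf ⊢
      refine Derivation.map_mem_span_of_map_mem _ ?_ hf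
      rintro _ ⟨i, rfl⟩
      rw [Derivation.leibniz_pow, nsmul_eq_mul, CharP.cast_eq_zero, zero_mul]
      exact zero_mem _

lemma derivation_apply [CharP k p] (hx : ∀ i, x i = Ideal.Quotient.mk _ (X i)) (i : Fin n) :
    derivation p n k (x i) = divPowMonomial k p x (p ^ (i : ℕ) - 1) := by
  obtain rfl : x = fun i => Ideal.Quotient.mkₐ k _ (X i) := funext hx
  rw [derivation, Derivation.liftOfSurjective_apply, mkDerivation_X, AlgHom.map_divPowMonomial]

end TruncPoly

def IsDerivation.toDerivation {R A : Type*} [CommRing R] [CommRing A] [Algebra R A] {δ : A → A}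
    (hδ : IsDerivation δ) (halg : ∀ c : R, δ (algebraMap R A c) = 0) : Derivation R A A :=
  Derivation.mk'
    { toFun := δ
      map_add' := hδ.1
      map_smul' := fun c a => by simp [Algebra.smul_def, hδ.2, halg] }
    fun a b => by simp only [LinearMap.coe_mk, AddHom.coe_mk, hδ.2, smul_eq_mul]; ring

lemma Derivation.isDerivation {R A : Type*} [CommRing R] [CommRing A] [Algebra R A]
    (D : Derivation R A A) : IsDerivation D :=
  ⟨D.map_add, fun a b => by rw [D.leibniz, smul_eq_mul, smul_eq_mul]; ring⟩

theorem stmt17_general (p : ℕ) (hp : p.Prime) (k : Type*) [Field k] [CharP k p]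
    (n : ℕ)
    -- `x_i` is the image of `X_i`
    (x : Fin n → TruncPoly p n k)
    (hx : ∀ i, x i = Ideal.Quotient.mk _ (MvPolynomial.X i))
    -- `x^{[j]} := Π_ν x_ν^{j_ν}/j_ν!` for the `p`-adic digits `j_ν` of `j`
    (xb : ℕ → TruncPoly p n k)
    (hxb : ∀ j : ℕ, j < p ^ n → xb j = ∏ ν : Fin n,
      algebraMap k (TruncPoly p n k) (((j / p ^ (ν : ℕ) % p).factorial : k)⁻¹) *
        x ν ^ (j / p ^ (ν : ℕ) % p)) :
    -- there is a (unique) `k`-derivation `δ = Σ_i x^{[p^i−1]} ∂/∂x_i`, i.e. with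
    -- `δ(x_i) = x^{[p^i−1]}`, and every such `δ` has the stated properties
    (∃ δ : TruncPoly p n k → TruncPoly p n k, IsDerivation δ ∧
      (∀ c : k, δ (algebraMap k (TruncPoly p n k) c) = 0) ∧
      (∀ i : Fin n, δ (x i) = xb (p ^ (i : ℕ) - 1))) ∧
    (∀ δ : TruncPoly p n k → TruncPoly p n k, IsDerivation δ →
      (∀ c : k, δ (algebraMap k (TruncPoly p n k) c) = 0) →
      (∀ i : Fin n, δ (x i) = xb (p ^ (i : ℕ) - 1)) →
      -- `δ` is a simple derivation
      (∀ I : Ideal (TruncPoly p n k), (∀ a ∈ I, δ a ∈ I) → I = ⊥ ∨ I = ⊤) ∧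
      -- `δ` is nilpotent with `δ^{p^n} = 0`
      (∀ r : TruncPoly p n k, δ^[p ^ n] r = 0) ∧
      -- `δ^{p^i}(x^{[p^i]}) = 1`
      (∀ i : Fin n, δ^[p ^ (i : ℕ)] (xb (p ^ (i : ℕ))) = 1) ∧
      -- in particular `δ ∈ nsder(R)`, where the maximal ideal is `(x_0,…,x_{n−1})`
      Nsder p (Ideal.span (Set.range x)) δ) := by
  have : Fact p.Prime := ⟨hp⟩
  have hxb' : ∀ j < p ^ n, xb j = divPowMonomial k p x j := hxb
  have hlt : ∀ i : Fin n, p ^ (i : ℕ) < p ^ n := fun i => Nat.pow_lt_pow_right hp.one_lt i.isLt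
  have hpred : ∀ i : Fin n, xb (p ^ (i : ℕ) - 1) = divPowMonomial k p x (p ^ (i : ℕ) - 1) :=
    fun i => hxb' _ ((Nat.sub_le _ 1).trans_lt (hlt i))
  refine ⟨⟨TruncPoly.derivation p n k, Derivation.isDerivation _, Derivation.map_algebraMap _,
    fun i => by rw [TruncPoly.derivation_apply p n k hx, hpred]⟩, fun δ hδ halg hδx => ?_⟩
  let D : Derivation k (TruncPoly p n k) (TruncPoly p n k) := hδ.toDerivation halg
  have hlower : ∀ j, j ≠ 0 → j < p ^ n →
      D (divPowMonomial k p x j) = divPowMonomial k p x (j - 1) := fun j hj0 hj =>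
    D.map_divPowMonomial (fun i => (hδx i).trans (hpred i))
      (TruncPoly.pow_eq_zero_of_eq_mk_X p n k hx) hj0 hj
  have hspan := TruncPoly.span_divPowMonomial_eq_top p n k hx
  have hnil : ∀ m, p ^ n ≤ m → ∀ r, δ^[m] r = 0 := fun m hm =>
    D.iterate_eq_zero hlower hspan (divPowMonomial_zero p x) hm
  have hsimple := D.ideal_eq_bot_or_top hlower hspan (divPowMonomial_zero p x)
  have hone : ∀ i : Fin n, δ^[p ^ (i : ℕ)] (xb (p ^ (i : ℕ))) = 1 := fun i => by
    rw [hxb' _ (hlt i)]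
    exact (D.iterate_apply_of_le hlower le_rfl (hlt i)).trans
      (by rw [Nat.sub_self, divPowMonomial_zero])
  refine ⟨hsimple, hnil _ le_rfl, hone, hδ, ⟨_, hnil _ le_rfl⟩, hsimple, fun i ⟨r, hr⟩ => ?_⟩
  have hin : i < n := not_le.1 fun h => hr (hnil _ (Nat.pow_le_pow_right hp.pos h) r)
  refine ⟨x ⟨i, hin⟩, Ideal.subset_span ⟨_, rfl⟩, ?_⟩
  have hxi := hone ⟨i, hin⟩
  rwa [hxb' _ (hlt _), divPowMonomial_pow p x hp.one_lt] at hxi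

theorem stmt17 (p : ℕ) (hp : p.Prime) (k : Type*) [Field k] [CharP k p]
    (n : ℕ) (hn : 1 ≤ n)
    -- `x_i` is the image of `X_i`
    (x : Fin n → TruncPoly p n k)
    (hx : ∀ i, x i = Ideal.Quotient.mk _ (MvPolynomial.X i))
    -- `x^{[j]} := Π_ν x_ν^{j_ν}/j_ν!` for the `p`-adic digits `j_ν` of `j`
    (xb : ℕ → TruncPoly p n k)
    (hxb : ∀ j : ℕ, j < p ^ n → xb j = ∏ ν : Fin n,
      algebraMap k (TruncPoly p n k) (((j / p ^ (ν : ℕ) % p).factorial : k)⁻¹) *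
        x ν ^ (j / p ^ (ν : ℕ) % p)) :
    -- there is a (unique) `k`-derivation `δ = Σ_i x^{[p^i−1]} ∂/∂x_i`, i.e. with
    -- `δ(x_i) = x^{[p^i−1]}`, and every such `δ` has the stated properties
    (∃ δ : TruncPoly p n k → TruncPoly p n k, IsDerivation δ ∧
      (∀ c : k, δ (algebraMap k (TruncPoly p n k) c) = 0) ∧
      (∀ i : Fin n, δ (x i) = xb (p ^ (i : ℕ) - 1))) ∧
    (∀ δ : TruncPoly p n k → TruncPoly p n k, IsDerivation δ →
      (∀ c : k, δ (algebraMap k (TruncPoly p n k) c) = 0) →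
      (∀ i : Fin n, δ (x i) = xb (p ^ (i : ℕ) - 1)) →
      -- `δ` is a simple derivation
      (∀ I : Ideal (TruncPoly p n k), (∀ a ∈ I, δ a ∈ I) → I = ⊥ ∨ I = ⊤) ∧
      -- `δ` is nilpotent with `δ^{p^n} = 0`
      (∀ r : TruncPoly p n k, δ^[p ^ n] r = 0) ∧
      -- `δ^{p^i}(x^{[p^i]}) = 1`
      (∀ i : Fin n, δ^[p ^ (i : ℕ)] (xb (p ^ (i : ℕ))) = 1) ∧
      -- in particular `δ ∈ nsder(R)`, where the maximal ideal is `(x_0,…,x_{n−1})`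
      Nsder p (Ideal.span (Set.range x)) δ) :=
  stmt17_general p hp k n x hx xb hxb
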